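/- arXiv:1906.03932 — 2 statements merged into one kernel-verified Lean document; each statement's English description precedes it below -/
import Mathlib

section
/- If there exists an integer cyclically k-diagonal relative Heffter array H_k(n;k) with n ≥ k+4, then there exists an integer cyclically (k+4)-diagonal relative Heffter array H_{k+4}(n;k+4). -/
/-!
Keep the `k` diagonals of `A` and fill the next four with the integers of absolute value in
`(M, M + 2(2n+1)]` that are not multiples of `2n+1`, where `M = ⌊(2nk+k)/2⌋` bounds the entries
of `A`. On the `s`-th new diagonal the entry in row `x` is `±(M + bandBase s + (x - s mod 2) + 1)`
with signs `+, −, −, +`. The bases `0, n+ε, 2n+1, 3n+1+ε` have signed sum zero; in a row the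
shifts `x - s mod 2` cancel between diagonals 0, 2 and 1, 3, and in a column, where diagonal `s`
meets row `x + s`, between diagonals 0, 1 and 2, 3. Hence all new row and column sums vanish.
Since `M ≡ ε n (mod 2n+1)` with `ε = k mod 2`, the four ranges `bandBase s + [1, n]` tile
`[1, 2(2n+1)]` minus exactly the two offsets that give multiples of `2n+1`.
-/

/-- Number of filled cells in row `i` of the partially filled array `A`. -/
def rowFilled {m n : ℕ} (A : Fin m → Fin n → Option ℤ) (i : Fin m) : ℕ :=
  (Finset.univ.filter fun j => (A i j).isSome).card

/-- Number of filled cells in column `j` of the partially filled array `A`. -/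
def colFilled {m n : ℕ} (A : Fin m → Fin n → Option ℤ) (j : Fin n) : ℕ :=
  (Finset.univ.filter fun i => (A i j).isSome).card

/-- Sum of the entries of row `i` (empty cells count as `0`). -/
def rowSum {m n : ℕ} (A : Fin m → Fin n → Option ℤ) (i : Fin m) : ℤ :=
  ∑ j, (A i j).getD 0

/-- Sum of the entries of column `j` (empty cells count as `0`). -/
def colSum {m n : ℕ} (A : Fin m → Fin n → Option ℤ) (j : Fin n) : ℤ :=
  ∑ i, (A i j).getD 0

/-- `A` is a square integer relative Heffter array `H_t(n;k)`, written with
integer entries: each row and each column has exactly `k` filled cells, each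
row and column sums to `0` in `ℤ`, every entry `x` satisfies
`1 ≤ |x| ≤ ⌊(2nk+t)/2⌋` with `|x|` not a multiple of `(2nk+t)/t` (i.e. the
class of `x` avoids the subgroup `J` of order `t`), and for every admissible
absolute value exactly one cell contains it (up to sign), so that every class
of `ZMod (2nk+t) \ J` is represented exactly once up to sign. -/
def IsIntHeffter (n k t : ℕ) (A : Fin n → Fin n → Option ℤ) : Prop :=
  (∀ i, rowFilled A i = k) ∧
  (∀ j, colFilled A j = k) ∧
  (∀ i, rowSum A i = 0) ∧
  (∀ j, colSum A j = 0) ∧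
  (∀ i j x, A i j = some x →
    1 ≤ x.natAbs ∧ x.natAbs ≤ (2 * n * k + t) / 2 ∧
      ¬ ((2 * n * k + t) / t ∣ x.natAbs)) ∧
  (∀ x : ℕ, 1 ≤ x → x ≤ (2 * n * k + t) / 2 → ¬ ((2 * n * k + t) / t ∣ x) →
    ∃! p : Fin n × Fin n, A p.1 p.2 = some (x : ℤ) ∨ A p.1 p.2 = some (-(x : ℤ)))

/-- A square partially filled integer array is shiftable if every row and every
column contains as many positive entries as negative entries. -/
def Shiftable {n : ℕ} (A : Fin n → Fin n → Option ℤ) : Prop :=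
  (∀ i : Fin n, (Finset.univ.filter fun j => 0 < (A i j).getD 0).card =
      (Finset.univ.filter fun j => (A i j).getD 0 < 0).card) ∧
  (∀ j : Fin n, (Finset.univ.filter fun i => 0 < (A i j).getD 0).card =
      (Finset.univ.filter fun i => (A i j).getD 0 < 0).card)

/-- `A` is cyclically `k`-diagonal: its filled cells are exactly those of `k`
consecutive cyclic diagonals (cell `(r,c)` lies on diagonal `r - c (mod n)`). -/
def CycDiagonal {n : ℕ} (k : ℕ) (A : Fin n → Fin n → Option ℤ) : Prop :=
  ∃ d : ZMod n, ∀ r c : Fin n, (A r c).isSome ↔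
    ∃ j : ℕ, j < k ∧ ((r : ℕ) : ZMod n) - ((c : ℕ) : ZMod n) = d + (j : ZMod n)

/-- `A` (of size `N` with `s ∣ N`) is cyclically `(s,k)`-diagonal: it is obtained
from a cyclically `k`-diagonal `(N/s) × (N/s)` array by blowing up each cell into
an `s × s` block and then cyclically shifting the columns by some offset. -/
def CycSKDiagonal (s k : ℕ) {N : ℕ} (A : Fin N → Fin N → Option ℤ) : Prop :=
  s ∣ N ∧ ∃ (d : ZMod (N / s)) (off : ℕ), ∀ r c : Fin N, (A r c).isSome ↔
    ∃ j : ℕ, j < k ∧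
      (((r : ℕ) / s : ℕ) : ZMod (N / s)) - (((((c : ℕ) + off) % N) / s : ℕ) : ZMod (N / s))
        = d + (j : ZMod (N / s))

/-- The support of a partially filled integer array: the set of absolute values
of its entries. -/
def suppSet {m n : ℕ} (A : Fin m → Fin n → Option ℤ) : Set ℕ :=
  {a | ∃ i j x, A i j = some x ∧ x.natAbs = a}

/-- The entries of `A` have pairwise distinct absolute values. -/
def DistinctAbs {m n : ℕ} (A : Fin m → Fin n → Option ℤ) : Prop :=
  ∀ i j i' j' x y, A i j = some x → A i' j' = some y →
    x.natAbs = y.natAbs → (i, j) = (i', j')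

/-- The skeleton of a partially filled array: the set of its filled positions. -/
def skel {m n : ℕ} (A : Fin m → Fin n → Option ℤ) : Set (Fin m × Fin n) :=
  {p | (A p.1 p.2).isSome}


namespace ZMod

variable {n : ℕ} [NeZero n]

theorem eq_natCast_iff_val_eq {a : ℕ} (ha : a < n) (y : ZMod n) : y = a ↔ y.val = a :=
  ⟨fun h => h ▸ val_natCast_of_lt ha, fun h => h ▸ (natCast_zmod_val y).symm⟩

theorem exists_lt_eq_natCast_iff_val_lt {k : ℕ} (hk : k ≤ n) (y : ZMod n) :
    (∃ j < k, y = j) ↔ y.val < k :=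
  ⟨fun ⟨j, hj, hy⟩ => (eq_natCast_iff_val_eq (by omega) y).1 hy ▸ hj,
    fun h => ⟨y.val, h, (natCast_zmod_val y).symm⟩⟩

theorem val_sub_natCast_lt_iff {k m : ℕ} (hkm : k + m ≤ n) (y : ZMod n) :
    (y - k).val < m ↔ k ≤ y.val ∧ y.val < k + m := by
  rw [← exists_lt_eq_natCast_iff_val_lt (by omega)]
  constructor
  · rintro ⟨s, hs, hy⟩
    rw [sub_eq_iff_eq_add', ← Nat.cast_add, eq_natCast_iff_val_eq (by omega)] at hy
    omega
  · rintro ⟨h₁, h₂⟩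
    refine ⟨y.val - k, by omega, ?_⟩
    rw [sub_eq_iff_eq_add', ← Nat.cast_add, eq_natCast_iff_val_eq (by omega)]
    omega

end ZMod

open Finset

section Diagonals

variable {n : ℕ}

def diagOffset (d : ZMod n) (r c : Fin n) : ℕ :=
  (((r : ℕ) : ZMod n) - ((c : ℕ) : ZMod n) - d).val

def IsBand (d : ZMod n) (k : ℕ) (A : Fin n → Fin n → Option ℤ) : Prop :=
  ∀ r c, (A r c).isSome ↔ diagOffset d r c < k

def bandArray (d : ZMod n) (m : ℕ) (f : ℕ → ZMod n → ℤ) : Fin n → Fin n → Option ℤ :=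
  fun r c => if diagOffset d r c < m then some (f (diagOffset d r c) r) else none

theorem isBand_bandArray (d : ZMod n) (m : ℕ) (f : ℕ → ZMod n → ℤ) :
    IsBand d m (bandArray d m f) := by
  intro r c
  unfold bandArray
  split_ifs with h <;> simp [h]

variable [NeZero n]

theorem cycDiagonal_iff_exists_isBand {k : ℕ} (hk : k ≤ n) (A : Fin n → Fin n → Option ℤ) :
    CycDiagonal k A ↔ ∃ d, IsBand d k A := by
  simp only [CycDiagonal, IsBand, diagOffset, ← ZMod.exists_lt_eq_natCast_iff_val_lt hk,
    sub_eq_iff_eq_add']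

theorem diagOffset_add_natCast_lt_iff {k m : ℕ} (hkm : k + m ≤ n) (d : ZMod n) (r c : Fin n) :
    diagOffset (d + (k : ZMod n)) r c < m ↔ k ≤ diagOffset d r c ∧ diagOffset d r c < k + m := by
  rw [diagOffset, ← sub_sub, ZMod.val_sub_natCast_lt_iff hkm]
  rfl

theorem sum_diagOffset_row {β : Type*} [AddCommMonoid β] (d : ZMod n) (r : Fin n) (g : ℕ → β) :
    ∑ c : Fin n, g (diagOffset d r c) = ∑ j ∈ range n, g j := by
  refine sum_nbij' (fun c => diagOffset d r c)
    (fun j => ⟨(((r : ℕ) : ZMod n) - d - j).val, ZMod.val_lt _⟩) (fun c _ => ?_) (by simp)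
    (fun c _ => ?_) (fun j hj => ?_) (by simp)
  · exact mem_range.2 (ZMod.val_lt _)
  · ext; simp [diagOffset, ZMod.val_natCast_of_lt c.is_lt]
  · refine (ZMod.eq_natCast_iff_val_eq (mem_range.1 hj) _).1 ?_
    simp only [ZMod.natCast_val, ZMod.cast_id', id_eq]
    ring

theorem sum_diagOffset_col {β : Type*} [AddCommMonoid β] (d : ZMod n) (c : Fin n)
    (g : ℕ → ZMod n → β) :
    ∑ r : Fin n, g (diagOffset d r c) r = ∑ j ∈ range n, g j ((c : ℕ) + d + j) := by
  refine sum_nbij' (fun r => diagOffset d r c)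
    (fun j => ⟨(((c : ℕ) : ZMod n) + d + j).val, ZMod.val_lt _⟩) (fun r _ => ?_) (by simp)
    (fun r _ => ?_) (fun j hj => ?_) (fun r _ => ?_)
  · exact mem_range.2 (ZMod.val_lt _)
  · ext; simp [diagOffset, ZMod.val_natCast_of_lt r.is_lt]
  · refine (ZMod.eq_natCast_iff_val_eq (mem_range.1 hj) _).1 ?_
    simp only [ZMod.natCast_val, ZMod.cast_id', id_eq]
    ring
  · simp [diagOffset]

end Diagonals

section Overlay

variable {m n : ℕ}

def absEntry (A : Fin m → Fin n → Option ℤ) (p : Fin m × Fin n) : ℕ :=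
  ((A p.1 p.2).getD 0).natAbs

def overlay (A N : Fin m → Fin n → Option ℤ) : Fin m → Fin n → Option ℤ :=
  fun r c => (A r c).or (N r c)

variable {A N : Fin m → Fin n → Option ℤ}

theorem skel_overlay : skel (overlay A N) = skel A ∪ skel N := by
  ext p
  simp [skel, overlay]

theorem overlay_of_mem_skel_left {p : Fin m × Fin n} (hp : p ∈ skel A) :
    overlay A N p.1 p.2 = A p.1 p.2 := by
  obtain ⟨x, hx⟩ := Option.isSome_iff_exists.1 hp
  simp [overlay, hx]

theorem overlay_of_notMem_skel_left {p : Fin m × Fin n} (hp : p ∉ skel A) :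
    overlay A N p.1 p.2 = N p.1 p.2 := by
  simp_all [skel, overlay]

variable (hAN : Disjoint (skel A) (skel N))
include hAN

theorem getD_overlay (r : Fin m) (c : Fin n) :
    (overlay A N r c).getD 0 = (A r c).getD 0 + (N r c).getD 0 := by
  by_cases hA : (r, c) ∈ skel A
  · have hN : N r c = none := by
      simpa [skel] using Set.disjoint_left.1 hAN hA
    rw [overlay_of_mem_skel_left hA, hN, Option.getD_none, add_zero]
  · rw [overlay_of_notMem_skel_left hA, Option.not_isSome_iff_eq_none.1 hA, Option.getD_none,
      zero_add]

theorem rowSum_overlay (r : Fin m) : rowSum (overlay A N) r = rowSum A r + rowSum N r := by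
  simp only [rowSum, getD_overlay hAN, sum_add_distrib]

theorem colSum_overlay (c : Fin n) : colSum (overlay A N) c = colSum A c + colSum N c := by
  simp only [colSum, getD_overlay hAN, sum_add_distrib]

theorem bijOn_absEntry_overlay {S T : Set ℕ} (hA : Set.BijOn (absEntry A) (skel A) S)
    (hN : Set.BijOn (absEntry N) (skel N) T) (hST : Disjoint S T) :
    Set.BijOn (absEntry (overlay A N)) (skel (overlay A N)) (S ∪ T) := by
  have hA' : Set.BijOn (absEntry (overlay A N)) (skel A) S :=
    hA.congr fun p hp => by simp only [absEntry, overlay_of_mem_skel_left hp]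
  have hN' : Set.BijOn (absEntry (overlay A N)) (skel N) T :=
    hN.congr fun p hp => by
      simp only [absEntry, overlay_of_notMem_skel_left (Set.disjoint_right.1 hAN hp)]
  rw [skel_overlay]
  exact hA'.union hN' ((Set.injOn_union hAN).2 ⟨hA'.injOn, hN'.injOn,
    fun p hp q hq => hST.ne_of_mem (hA'.mapsTo hp) (hN'.mapsTo hq)⟩)

end Overlay

section Bands

variable {n : ℕ}

theorem sum_range_ite_lt {β : Type*} [AddCommMonoid β] {k : ℕ} (hk : k ≤ n) (g : ℕ → β) :
    ∑ j ∈ range n, (if j < k then g j else 0) = ∑ j ∈ range k, g j := by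
  rw [← sum_filter]
  congr 1
  ext j
  simp only [mem_filter, mem_range]
  omega

theorem natCast_val_injective : Function.Injective fun r : Fin n => ((r : ℕ) : ZMod n) :=
  fun r r' h => Fin.ext <| by
    simpa [ZMod.val_natCast_of_lt r.is_lt, ZMod.val_natCast_of_lt r'.is_lt] using
      congrArg ZMod.val h

variable [NeZero n] {d : ZMod n} {k : ℕ} {A : Fin n → Fin n → Option ℤ}

theorem IsBand.rowFilled_eq (hA : IsBand d k A) (hk : k ≤ n) (r : Fin n) : rowFilled A r = k := by
  simp only [rowFilled, card_filter, hA r]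
  rw [sum_diagOffset_row d r fun j => if j < k then 1 else 0, sum_range_ite_lt hk]
  simp

theorem IsBand.colFilled_eq (hA : IsBand d k A) (hk : k ≤ n) (c : Fin n) : colFilled A c = k := by
  simp only [colFilled, card_filter, fun r => hA r c]
  rw [sum_diagOffset_col d c fun j _ => if j < k then 1 else 0, sum_range_ite_lt hk]
  simp

theorem IsBand.overlay {m : ℕ} {N : Fin n → Fin n → Option ℤ} (hA : IsBand d k A)
    (hN : IsBand (d + (k : ZMod n)) m N) (hkm : k + m ≤ n) : IsBand d (k + m) (overlay A N) := by
  intro r c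
  simp only [_root_.overlay, Option.isSome_or, Bool.or_eq_true, hA r c, hN r c,
    diagOffset_add_natCast_lt_iff hkm]
  omega

theorem IsBand.disjoint_skel {m : ℕ} {N : Fin n → Fin n → Option ℤ} (hA : IsBand d k A)
    (hN : IsBand (d + (k : ZMod n)) m N) (hkm : k + m ≤ n) : Disjoint (skel A) (skel N) :=
  Set.disjoint_left.2 fun p hpA hpN => by
    have h₁ := (hA p.1 p.2).1 hpA
    have h₂ := (diagOffset_add_natCast_lt_iff hkm d p.1 p.2).1 ((hN p.1 p.2).1 hpN)
    omega

variable {m : ℕ} (hm : m ≤ n) (f : ℕ → ZMod n → ℤ)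
include hm

theorem rowSum_bandArray (r : Fin n) :
    rowSum (bandArray d m f) r = ∑ s ∈ range m, f s r := by
  simp only [rowSum, bandArray, apply_ite fun o : Option ℤ => o.getD 0, Option.getD_some,
    Option.getD_none]
  rw [sum_diagOffset_row d r fun j => if j < m then f j r else 0, sum_range_ite_lt hm]

theorem colSum_bandArray (c : Fin n) :
    colSum (bandArray d m f) c = ∑ s ∈ range m, f s ((c : ℕ) + d + s) := by
  simp only [colSum, bandArray, apply_ite fun o : Option ℤ => o.getD 0, Option.getD_some,
    Option.getD_none]
  rw [sum_diagOffset_col d c fun j x => if j < m then f j x else 0, sum_range_ite_lt hm]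

theorem bijOn_absEntry_bandArray {T : Set ℕ}
    (hf : Set.BijOn (fun q : ℕ × ZMod n => (f q.1 q.2).natAbs) (Set.Iio m ×ˢ Set.univ) T) :
    Set.BijOn (absEntry (bandArray d m f)) (skel (bandArray d m f)) T := by
  have hcell : Set.BijOn (fun p : Fin n × Fin n => (diagOffset d p.1 p.2, ((p.1 : ℕ) : ZMod n)))
      (skel (bandArray d m f)) (Set.Iio m ×ˢ Set.univ) := by
    refine ⟨fun p hp => ⟨(isBand_bandArray d m f p.1 p.2).1 hp, trivial⟩, ?_, ?_⟩
    · rintro ⟨r, c⟩ - ⟨r', c'⟩ - h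
      simp only [Prod.mk.injEq] at h
      obtain rfl := natCast_val_injective h.2
      refine Prod.ext rfl (natCast_val_injective ?_)
      simpa [diagOffset] using ZMod.val_injective n h.1
    · rintro ⟨s, x⟩ ⟨hs, -⟩
      have hoff : diagOffset d ⟨x.val, x.val_lt⟩ ⟨(x - d - s).val, ZMod.val_lt _⟩ = s :=
        (ZMod.eq_natCast_iff_val_eq (lt_of_lt_of_le hs hm) _).1
          (by simp only [ZMod.natCast_val, ZMod.cast_id', id_eq]; ring)
      refine ⟨(⟨x.val, x.val_lt⟩, ⟨(x - d - s).val, ZMod.val_lt _⟩), ?_, ?_⟩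
      · exact (isBand_bandArray d m f _ _).2 (by rw [hoff]; exact hs)
      · simp [hoff]
  refine (hf.comp hcell).congr fun p hp => ?_
  simp [absEntry, bandArray, (isBand_bandArray d m f p.1 p.2).1 hp]

end Bands

section Heffter

theorem mem_skel_and_absEntry_eq_iff {m n : ℕ} {A : Fin m → Fin n → Option ℤ}
    {p : Fin m × Fin n} {x : ℕ} :
    p ∈ skel A ∧ absEntry A p = x ↔ A p.1 p.2 = some (x : ℤ) ∨ A p.1 p.2 = some (-(x : ℤ)) := by
  cases h : A p.1 p.2 <;> simp [skel, absEntry, h, Int.natAbs_eq_iff]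

theorem bijOn_absEntry_iff {m n : ℕ} {A : Fin m → Fin n → Option ℤ} (S : Set ℕ) :
    Set.BijOn (absEntry A) (skel A) S ↔ (∀ i j x, A i j = some x → x.natAbs ∈ S) ∧
      ∀ x ∈ S, ∃! p : Fin m × Fin n, A p.1 p.2 = some (x : ℤ) ∨ A p.1 p.2 = some (-(x : ℤ)) := by
  simp_rw [← mem_skel_and_absEntry_eq_iff]
  constructor
  · rintro ⟨hmaps, hinj, hsurj⟩
    refine ⟨fun i j x hx => ?_, fun x hx => ?_⟩
    · simpa [absEntry, hx] using hmaps (show (i, j) ∈ skel A by simp [skel, hx])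
    · obtain ⟨p, hp, rfl⟩ := hsurj hx
      exact ⟨p, ⟨hp, rfl⟩, fun q hq => hinj hq.1 hp hq.2⟩
  · rintro ⟨hmaps, huniq⟩
    have hmaps' : Set.MapsTo (absEntry A) (skel A) S := fun p hp => by
      obtain ⟨x, hx⟩ := Option.isSome_iff_exists.1 hp
      simpa [absEntry, hx] using hmaps p.1 p.2 x hx
    refine ⟨hmaps', fun p hp q hq hpq => ?_, fun x hx => ?_⟩
    · exact (huniq _ (hmaps' hp)).unique ⟨hp, rfl⟩ ⟨hq, hpq.symm⟩
    · obtain ⟨p, hp, -⟩ := huniq x hx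
      exact ⟨p, hp.1, hp.2⟩

theorem isIntHeffter_iff {n k t : ℕ} {A : Fin n → Fin n → Option ℤ} :
    IsIntHeffter n k t A ↔ (∀ i, rowFilled A i = k) ∧ (∀ j, colFilled A j = k) ∧
      (∀ i, rowSum A i = 0) ∧ (∀ j, colSum A j = 0) ∧
      Set.BijOn (absEntry A) (skel A)
        (Set.Ioc 0 ((2 * n * k + t) / 2) \ {x | (2 * n * k + t) / t ∣ x}) := by
  simp only [IsIntHeffter, bijOn_absEntry_iff, Set.mem_sdiff, Set.mem_Ioc, Set.mem_ofPred_eq,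
    and_imp, and_assoc]
  rfl

end Heffter

section ExtensionBand

variable {n : ℕ}

def bandBase (n ε : ℕ) : ℕ → ℕ
  | 0 => 0
  | 1 => n + ε
  | 2 => 2 * n + 1
  | _ => 3 * n + 1 + ε

def bandOffset (n ε s : ℕ) (x : ZMod n) : ℕ :=
  bandBase n ε s + (x - ((s % 2 : ℕ) : ZMod n)).val + 1

def extBandEntry (n M ε s : ℕ) (x : ZMod n) : ℤ :=
  (if s = 1 ∨ s = 2 then -1 else 1) * (M + bandOffset n ε s x : ℕ)

theorem natAbs_extBandEntry (M ε s : ℕ) (x : ZMod n) :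
    (extBandEntry n M ε s x).natAbs = M + bandOffset n ε s x := by
  unfold extBandEntry
  split_ifs <;> simp only [neg_one_mul, one_mul, Int.natAbs_neg, Int.natAbs_natCast]

theorem sum_extBandEntry_row (M ε : ℕ) (x : ZMod n) :
    ∑ s ∈ range 4, extBandEntry n M ε s x = 0 := by
  simp only [sum_range_succ, range_zero, sum_empty, extBandEntry, bandOffset, bandBase]
  push_cast
  simp only [or_self, or_true, or_false, ite_true, ite_false, sub_zero]
  ring

theorem sum_extBandEntry_col (M ε : ℕ) (x : ZMod n) :
    ∑ s ∈ range 4, extBandEntry n M ε s (x + s) = 0 := by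
  have h : x + 3 - 1 = x + 2 := by ring
  simp only [sum_range_succ, range_zero, sum_empty, extBandEntry, bandOffset, bandBase]
  push_cast
  simp only [or_self, or_true, or_false, ite_true, ite_false, sub_zero, add_zero,
    add_sub_cancel_right, h]
  ring

theorem bandBase_add_inj {ε s s' i i' : ℕ} (hε : ε ≤ 1) (hs : s < 4) (hs' : s' < 4)
    (hi : i < n) (hi' : i' < n) (h : bandBase n ε s + i = bandBase n ε s' + i') :
    s = s' ∧ i = i' := by
  interval_cases s <;> interval_cases s' <;> simp only [bandBase] at h <;> omega

theorem exists_bandBase_add_iff {ε u : ℕ} (hε : ε ≤ 1) :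
    (∃ s < 4, ∃ i < n, u = bandBase n ε s + i + 1) ↔
      0 < u ∧ u ≤ 2 * (2 * n + 1) ∧ ε * n + u ≠ 2 * n + 1 ∧ ε * n + u ≠ 2 * (2 * n + 1) := by
  have hεn : ε = 0 ∧ ε * n = 0 ∨ ε = 1 ∧ ε * n = n := by
    obtain rfl | rfl : ε = 0 ∨ ε = 1 := by omega
    all_goals simp
  constructor
  · rintro ⟨s, hs, i, hi, rfl⟩
    interval_cases s <;> simp only [bandBase] <;> omega
  · intro hu
    rcases (by omega : u ≤ n ∨ n < u ∧ u ≤ 2 * n + ε ∨ 2 * n + ε < u ∧ u ≤ 3 * n + 1 ∨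
      3 * n + 1 < u) with h | h | h | h
    · exact ⟨0, by norm_num, u - 1, by omega, by simp only [bandBase]; omega⟩
    · exact ⟨1, by norm_num, u - 1 - (n + ε), by omega, by simp only [bandBase]; omega⟩
    · exact ⟨2, by norm_num, u - 1 - (2 * n + 1), by omega, by simp only [bandBase]; omega⟩
    · exact ⟨3, by norm_num, u - 1 - (3 * n + 1 + ε), by omega, by simp only [bandBase]; omega⟩

theorem dvd_iff_eq_or_eq_two_mul {P y : ℕ} (hy : 0 < y) (hy' : y < 3 * P) :
    P ∣ y ↔ y = P ∨ y = 2 * P := by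
  constructor
  · rintro ⟨c, rfl⟩
    have hc : c < 3 := lt_of_mul_lt_mul_left (by linarith) (Nat.zero_le P)
    interval_cases c <;> omega
  · rintro (rfl | rfl)
    exacts [dvd_rfl, dvd_mul_left _ _]

theorem bijOn_natAbs_extBandEntry [NeZero n] {M ε : ℕ} (hε : ε ≤ 1)
    (hM : M ≡ ε * n [MOD 2 * n + 1]) :
    Set.BijOn (fun q : ℕ × ZMod n => (extBandEntry n M ε q.1 q.2).natAbs)
      (Set.Iio 4 ×ˢ Set.univ) (Set.Ioc M (M + 2 * (2 * n + 1)) \ {x | 2 * n + 1 ∣ x}) := by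
  have hdvd : ∀ u, 0 < u → u ≤ 2 * (2 * n + 1) →
      (2 * n + 1 ∣ M + u ↔ ε * n + u = 2 * n + 1 ∨ ε * n + u = 2 * (2 * n + 1)) := fun u h₁ h₂ => by
    rw [(hM.add_right u).dvd_iff dvd_rfl, dvd_iff_eq_or_eq_two_mul] <;> nlinarith
  simp only [natAbs_extBandEntry]
  refine ⟨?_, ?_, ?_⟩
  · rintro ⟨s, x⟩ ⟨hs, -⟩
    obtain ⟨h₁, h₂, h₃, h₄⟩ :=
      (exists_bandBase_add_iff hε).1 ⟨s, hs, _, ZMod.val_lt (x - ((s % 2 : ℕ) : ZMod n)), rfl⟩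
    simp only [Set.mem_sdiff, Set.mem_Ioc, Set.mem_ofPred_eq, bandOffset]
    refine ⟨⟨by omega, by omega⟩, fun hd => ?_⟩
    rcases (hdvd _ h₁ h₂).1 hd with h | h <;> contradiction
  · rintro ⟨s, x⟩ ⟨hs, -⟩ ⟨s', x'⟩ ⟨hs', -⟩ h
    have h' : bandBase n ε s + (x - ((s % 2 : ℕ) : ZMod n)).val =
        bandBase n ε s' + (x' - ((s' % 2 : ℕ) : ZMod n)).val := by
      simp only [bandOffset] at h; omega
    obtain ⟨rfl, hval⟩ := bandBase_add_inj hε hs hs' (ZMod.val_lt _) (ZMod.val_lt _) h'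
    simpa using ZMod.val_injective n hval
  · rintro t ⟨⟨h₁, h₂⟩, hnd⟩
    rw [Set.mem_ofPred_eq, show t = M + (t - M) by omega, hdvd _ (by omega) (by omega),
      not_or] at hnd
    obtain ⟨s, hs, i, hi, hu⟩ :=
      (exists_bandBase_add_iff hε).2 ⟨by omega, by omega, hnd.1, hnd.2⟩
    refine ⟨(s, (i : ZMod n) + (s % 2 : ℕ)), ⟨hs, trivial⟩, ?_⟩
    simp only [bandOffset, add_sub_cancel_right, ZMod.val_natCast_of_lt hi]
    omega

end ExtensionBand

theorem two_mul_mul_add_div_two_modEq (n k : ℕ) :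
    (2 * n * k + k) / 2 ≡ k % 2 * n [MOD 2 * n + 1] := by
  have h : 2 * n * k + k = 2 * (k % 2 * n + k / 2 * (2 * n + 1)) + k % 2 := by
    rcases Nat.even_or_odd' k with ⟨a, rfl | rfl⟩
    · rw [show 2 * a / 2 = a by omega, show 2 * a % 2 = 0 by omega]; ring
    · rw [show (2 * a + 1) / 2 = a by omega, show (2 * a + 1) % 2 = 1 by omega]; ring
  rw [h, show ∀ y, (2 * y + k % 2) / 2 = y by omega, Nat.ModEq, Nat.add_mul_mod_self_right]

theorem two_mul_mul_add_div_two_add_four (n k : ℕ) :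
    (2 * n * (k + 4) + (k + 4)) / 2 = (2 * n * k + k) / 2 + 2 * (2 * n + 1) := by
  rw [show 2 * n * (k + 4) + (k + 4) = 2 * n * k + k + 2 * (2 * (2 * n + 1)) by ring,
    Nat.add_mul_div_left _ _ two_pos]

theorem Ioc_sdiff_setOf_dvd_heffter (n k : ℕ) :
    Set.Ioc 0 ((2 * n * k + k) / 2) \ {x | (2 * n * k + k) / k ∣ x} =
      Set.Ioc 0 ((2 * n * k + k) / 2) \ {x | 2 * n + 1 ∣ x} := by
  rcases Nat.eq_zero_or_pos k with rfl | hk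
  · simp
  · rw [show 2 * n * k + k = k * (2 * n + 1) by ring, Nat.mul_div_cancel_left _ hk]

/-- an integer cyclically `k`-diagonal `H_k(n;k)` with `n ≥ k+4`
yields an integer cyclically `(k+4)`-diagonal `H_{k+4}(n;k+4)`. -/
theorem intHeffter_ext_diag (n k : ℕ) (hn : k + 4 ≤ n)
    (hex : ∃ A : Fin n → Fin n → Option ℤ, IsIntHeffter n k k A ∧ CycDiagonal k A) :
    ∃ A : Fin n → Fin n → Option ℤ,
      IsIntHeffter n (k + 4) (k + 4) A ∧ CycDiagonal (k + 4) A := by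
  obtain ⟨A, hA, hAdiag⟩ := hex
  have : NeZero n := ⟨by omega⟩
  obtain ⟨d, hAband⟩ := (cycDiagonal_iff_exists_isBand (by omega) A).1 hAdiag
  obtain ⟨-, -, hArow, hAcol, hAbij⟩ := isIntHeffter_iff.1 hA
  set M := (2 * n * k + k) / 2
  set N := bandArray (d + (k : ZMod n)) 4 (extBandEntry n M (k % 2))
  have hNband : IsBand (d + (k : ZMod n)) 4 N := isBand_bandArray _ _ _
  have hdisj := hAband.disjoint_skel hNband hn
  have hBband := hAband.overlay hNband hn
  refine ⟨overlay A N, isIntHeffter_iff.2 ⟨hBband.rowFilled_eq hn, hBband.colFilled_eq hn,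
    fun r => ?_, fun c => ?_, ?_⟩, (cycDiagonal_iff_exists_isBand hn _).2 ⟨d, hBband⟩⟩
  · rw [rowSum_overlay hdisj, hArow, rowSum_bandArray (by omega), sum_extBandEntry_row, add_zero]
  · rw [colSum_overlay hdisj, hAcol, colSum_bandArray (by omega), zero_add]
    exact sum_extBandEntry_col _ _ _
  · rw [Ioc_sdiff_setOf_dvd_heffter, two_mul_mul_add_div_two_add_four,
      ← Set.Ioc_union_Ioc_eq_Ioc (Nat.zero_le M) (Nat.le_add_right M _), Set.union_sdiff_distrib]
    rw [Ioc_sdiff_setOf_dvd_heffter] at hAbij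
    refine bijOn_absEntry_overlay hdisj hAbij (bijOn_absEntry_bandArray (by omega) _ ?_)
      ((Set.Ioc_disjoint_Ioc_of_le le_rfl).mono Set.sdiff_subset Set.sdiff_subset)
    exact bijOn_natAbs_extBandEntry (by omega) (two_mul_mul_add_div_two_modEq n k)
end

section
/- For every even integer n ≥ 6, there exists an integer cyclically (2,3)-diagonal relative Heffter array H_6(n;6) (the case t = k = 6, with support [1, 6n+2] \ {2n+1, 4n+2}). -/
/-!
Write `n = 2m` and place `2 × 2` blocks on three consecutive cyclic block diagonals of an
`m × m` block array, the block on diagonal `j` in block row `r` having entries affine in `r`.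
The row sums of the three blocks of a block row cancel identically in `r`. A block column meets
the three diagonals in three different block rows, but the column sums of each block do not
depend on `r`, and these three constants cancel.

As `r` runs over `0, …, m - 1`, each of the twelve entry positions of the blocks sweeps `m`
consecutive absolute values, and these twelve intervals tile `[1, 12m + 2] \ {4m + 1, 8m + 2}`.
So the `12m` absolute values are distinct, and since `12m` is also the number of admissible
values, each of them occurs exactly once.
-/

open Finset

def heffterSupport (n k t : ℕ) : Finset ℕ :=
  {x ∈ Icc 1 ((2 * n * k + t) / 2) | ¬ (2 * n * k + t) / t ∣ x}

theorem card_heffterSupport {n k t : ℕ} (ht : Even t) (ht0 : 0 < t) (htd : t ∣ 2 * n * k) :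
    #(heffterSupport n k t) = n * k := by
  obtain ⟨s, rfl⟩ := ht
  obtain ⟨q, hq⟩ := htd
  have hnk : n * k = s * q := by linarith
  have hv : 2 * n * k + (s + s) = (s + s) * (q + 1) := by rw [hq]; ring
  have hhalf : (2 * n * k + (s + s)) / 2 = s * (q + 1) := by
    rw [hv, show (s + s) * (q + 1) = 2 * (s * (q + 1)) by ring, Nat.mul_div_cancel_left _ two_pos]
  have hquot : (2 * n * k + (s + s)) / (s + s) = q + 1 := by
    rw [hv, Nat.mul_div_cancel_left _ ht0]
  have hsplit := card_filter_add_card_filter_not (s := Ioc 0 (s * (q + 1))) (q + 1 ∣ ·)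
  rw [Nat.Ioc_filter_dvd_card_eq_div, Nat.card_Ioc, Nat.mul_div_cancel _ q.succ_pos] at hsplit
  have hIcc : Icc 1 (s * (q + 1)) = Ioc 0 (s * (q + 1)) := by ext; simp; omega
  rw [heffterSupport, hhalf, hquot, hIcc, hnk]
  have := mul_add_one s q
  omega

theorem card_filled {n k : ℕ} {A : Fin n → Fin n → Option ℤ} (hrow : ∀ i, rowFilled A i = k) :
    #{p : Fin n × Fin n | (A p.1 p.2).isSome} = n * k := by
  calc #{p : Fin n × Fin n | (A p.1 p.2).isSome} = ∑ i, rowFilled A i := by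
        simp only [card_filter, Fintype.sum_prod_type, rowFilled]
    _ = n * k := by simp [hrow]

theorem isIntHeffter_of_distinctAbs {n k t : ℕ} {A : Fin n → Fin n → Option ℤ}
    (hrow : ∀ i, rowFilled A i = k) (hcol : ∀ j, colFilled A j = k)
    (hrs : ∀ i, rowSum A i = 0) (hcs : ∀ j, colSum A j = 0) (hdist : DistinctAbs A)
    (hsupp : ∀ i j x, A i j = some x → x.natAbs ∈ heffterSupport n k t)
    (hcard : #(heffterSupport n k t) = n * k) : IsIntHeffter n k t A := by
  set filled := ({p : Fin n × Fin n | (A p.1 p.2).isSome} : Finset _)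
  let absEntry : Fin n × Fin n → ℕ := fun p => ((A p.1 p.2).getD 0).natAbs
  have habs : ∀ p ∈ filled, ∃ x, A p.1 p.2 = some x ∧ absEntry p = x.natAbs := by
    intro p hp
    obtain ⟨x, hx⟩ := Option.isSome_iff_exists.1 (mem_filter.1 hp).2
    exact ⟨x, hx, by simp [absEntry, hx]⟩
  have hinj : Set.InjOn absEntry filled := by
    intro p hp q hq hpq
    obtain ⟨x, hx, hpx⟩ := habs p hp
    obtain ⟨y, hy, hqy⟩ := habs q hq
    exact hdist _ _ _ _ x y hx hy (hpx ▸ hqy ▸ hpq)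
  have himage : filled.image absEntry = heffterSupport n k t := by
    refine eq_of_subset_of_card_le (fun a ha => ?_) ?_
    · obtain ⟨p, hp, rfl⟩ := mem_image.1 ha
      obtain ⟨x, hx, hpx⟩ := habs p hp
      exact hpx ▸ hsupp _ _ x hx
    · rw [card_image_of_injOn hinj, card_filled hrow, hcard]
  refine ⟨hrow, hcol, hrs, hcs, fun i j x hx => ?_, fun a ha1 ha2 ha3 => ?_⟩
  · simpa [heffterSupport, and_assoc] using hsupp i j x hx
  · have ha : a ∈ filled.image absEntry := himage ▸ by simp [heffterSupport, *]
    obtain ⟨p, hp, hpa⟩ := mem_image.1 ha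
    obtain ⟨x, hx, hpx⟩ := habs p hp
    refine ⟨p, ?_, fun q hq => ?_⟩
    · dsimp only
      rw [hx, ← hpa, hpx]
      rcases Int.natAbs_eq x with h | h
      · exact Or.inl (congrArg some h)
      · exact Or.inr (congrArg some h)
    · obtain ⟨y, hy, hya⟩ : ∃ y, A q.1 q.2 = some y ∧ y.natAbs = a := by
        rcases hq with h | h <;> exact ⟨_, h, by simp⟩
      exact hdist _ _ _ _ y x hy hx (by rw [hya, ← hpa, hpx])

section Blowup

variable {m s k : ℕ} {P : ℕ → ℕ → Matrix (Fin s) (Fin s) ℤ}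

/-- The `(m s) × (m s)` array made of `s × s` blocks whose block in position `(r, c)` is
`P (r - c) r` when `(r - c) mod m < k`, and empty otherwise. -/
def blowup (m k : ℕ) (P : ℕ → ℕ → Matrix (Fin s) (Fin s) ℤ) (R C : Fin (m * s)) :
    Option ℤ :=
  if ((R.divNat - C.divNat : Fin m) : ℕ) < k then
    some (P (R.divNat - C.divNat : Fin m) R.divNat R.modNat C.modNat)
  else none

@[simp]
theorem divNat_finProdFinEquiv (r : Fin m) (ρ : Fin s) : (finProdFinEquiv (r, ρ)).divNat = r :=
  congrArg Prod.fst (finProdFinEquiv.symm_apply_apply (r, ρ))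

@[simp]
theorem modNat_finProdFinEquiv (r : Fin m) (ρ : Fin s) : (finProdFinEquiv (r, ρ)).modNat = ρ :=
  congrArg Prod.snd (finProdFinEquiv.symm_apply_apply (r, ρ))

theorem eq_of_divNat_eq_of_modNat_eq {R R' : Fin (m * s)} (hdiv : R.divNat = R'.divNat)
    (hmod : R.modNat = R'.modNat) : R = R' :=
  finProdFinEquiv.symm.injective (Prod.ext hdiv hmod)

theorem exists_of_blowup_eq_some {R C : Fin (m * s)} {x : ℤ} (h : blowup m k P R C = some x) :
    ∃ j < k, ∃ r < m, ∃ ρ γ, P j r ρ γ = x := by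
  simp only [blowup] at h
  split_ifs at h with hk
  exact ⟨_, hk, _, Fin.isLt _, _, _, Option.some_inj.1 h⟩

theorem natCast_val_sub (a b : Fin m) :
    (((a - b : Fin m) : ℕ) : ZMod m) = (a : ℕ) - (b : ℕ) := by
  rw [Fin.val_sub, ZMod.natCast_mod, Nat.cast_add, Nat.cast_sub b.isLt.le, ZMod.natCast_self]
  ring

theorem sum_fin_ite_lt {M : Type*} [AddCommMonoid M] (hk : k ≤ m) (f : ℕ → M) :
    ∑ d : Fin m, (if (d : ℕ) < k then f d else 0) = ∑ j ∈ range k, f j := by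
  rw [Fin.sum_univ_eq_sum_range (fun j => if j < k then f j else 0), ← sum_filter]
  congr 1
  ext j
  simp only [mem_filter, mem_range]
  omega

theorem cycSKDiagonal_blowup (hs : 0 < s) (hk : k ≤ m) : CycSKDiagonal s k (blowup m k P) := by
  refine ⟨dvd_mul_left s m, ?_⟩
  rw [Nat.mul_div_cancel m hs]
  refine ⟨0, 0, fun R C => ?_⟩
  rw [add_zero, Nat.mod_eq_of_lt C.isLt, ← Fin.coe_divNat, ← Fin.coe_divNat, ← natCast_val_sub]
  simp only [blowup, zero_add]
  split_ifs with h
  · simpa using ⟨_, h, rfl⟩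
  · simp only [Option.isSome_none, Bool.false_eq_true, false_iff, not_exists, not_and]
    intro j hj hdj
    rw [ZMod.natCast_eq_natCast_iff', Nat.mod_eq_of_lt (Fin.isLt _),
      Nat.mod_eq_of_lt (hj.trans_le hk)] at hdj
    omega

variable [NeZero m]

theorem distinctAbs_blowup
    (hP : ∀ j j' r r' ρ ρ' γ γ', j < k → j' < k → r < m → r' < m →
      (P j r ρ γ).natAbs = (P j' r' ρ' γ').natAbs → j = j' ∧ r = r' ∧ ρ = ρ' ∧ γ = γ') :
    DistinctAbs (blowup m k P) := by
  intro R C R' C' x y hx hy hxy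
  simp only [blowup] at hx hy
  split_ifs at hx hy with h h'
  obtain ⟨hd, hr, hρ, hγ⟩ := hP _ _ _ _ _ _ _ _ h h' (Fin.isLt _) (Fin.isLt _)
    (by rw [Option.some_inj.1 hx, Option.some_inj.1 hy, hxy])
  have hR : R.divNat = R'.divNat := Fin.ext hr
  rw [hR, Fin.val_inj, sub_right_inj] at hd
  rw [eq_of_divNat_eq_of_modNat_eq hR hρ, eq_of_divNat_eq_of_modNat_eq hd hγ]

section Sums

variable {M : Type*} [AddCommMonoid M] (F : Option ℤ → M) (hF : F none = 0)
include hF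

theorem sum_row_blowup (hk : k ≤ m) (R : Fin (m * s)) :
    ∑ C, F (blowup m k P R C) = ∑ j ∈ range k, ∑ γ, F (some (P j R.divNat R.modNat γ)) := by
  rw [← finProdFinEquiv.sum_comp, Fintype.sum_prod_type,
    ← Equiv.sum_comp (Equiv.subLeft R.divNat), ← sum_fin_ite_lt hk]
  refine sum_congr rfl fun d _ => ?_
  simp only [blowup, Equiv.subLeft_apply, divNat_finProdFinEquiv, modNat_finProdFinEquiv,
    sub_sub_cancel, apply_ite F, hF, sum_ite_irrel, sum_const_zero]

theorem sum_col_blowup (hk : k ≤ m) (C : Fin (m * s)) :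
    ∑ R, F (blowup m k P R C)
      = ∑ j ∈ range k, ∑ ρ, F (some (P j ((j + C.divNat) % m) ρ C.modNat)) := by
  rw [← finProdFinEquiv.sum_comp, Fintype.sum_prod_type,
    ← Equiv.sum_comp (Equiv.addRight C.divNat), ← sum_fin_ite_lt hk]
  refine sum_congr rfl fun d _ => ?_
  simp only [blowup, Equiv.coe_addRight, divNat_finProdFinEquiv, modNat_finProdFinEquiv,
    add_sub_cancel_right, Fin.val_add, apply_ite F, hF, sum_ite_irrel, sum_const_zero]

end Sums

theorem rowFilled_blowup (hk : k ≤ m) (R : Fin (m * s)) :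
    rowFilled (blowup m k P) R = k * s := by
  rw [rowFilled, card_filter, sum_row_blowup (fun o => if o.isSome then 1 else 0) rfl hk]
  simp

theorem colFilled_blowup (hk : k ≤ m) (C : Fin (m * s)) :
    colFilled (blowup m k P) C = k * s := by
  rw [colFilled, card_filter, sum_col_blowup (fun o => if o.isSome then 1 else 0) rfl hk]
  simp

end Blowup

/-- The block on cyclic block diagonal `j ∈ {0, 1, 2}` in block row `r`. -/
def heffterBlock (m : ℤ) (j : ℕ) (r : ℤ) : Matrix (Fin 2) (Fin 2) ℤ :=
  match j with
  | 0 => !![r + 1, m + 1 + r; 3 * m - r, 4 * m - r]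
  | 1 => !![-(4 * m + 2 + r), 6 * m + 2 + r; 7 * m + 2 + r, 9 * m + 2 - r]
  | _ => !![6 * m + 1 - r, -(9 * m + 3 + r); -(12 * m + 2 - r), -(11 * m + 2 - r)]

theorem sum_heffterBlock_row (m r : ℤ) (ρ : Fin 2) :
    ∑ j ∈ range 3, ∑ γ, heffterBlock m j r ρ γ = 0 := by
  fin_cases ρ <;> simp [sum_range_succ, heffterBlock] <;> ring

theorem sum_heffterBlock_col (m : ℤ) (r : ℕ → ℤ) (γ : Fin 2) :
    ∑ j ∈ range 3, ∑ ρ, heffterBlock m j (r j) ρ γ = 0 := by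
  fin_cases γ <;> simp [sum_range_succ, heffterBlock] <;> ring

theorem natAbs_heffterBlock_mem {m j r : ℕ} (ρ γ : Fin 2) (hj : j < 3) (hr : r < m) :
    (heffterBlock m j r ρ γ).natAbs ∈ heffterSupport (m * 2) 6 6 := by
  set x := (heffterBlock m j r ρ γ).natAbs with hx
  obtain ⟨hx1, hx2, hx3, hx4⟩ : 1 ≤ x ∧ x ≤ 12 * m + 2 ∧ x ≠ 4 * m + 1 ∧ x ≠ 8 * m + 2 := by
    interval_cases j <;> fin_cases ρ <;> fin_cases γ <;> simp [hx, heffterBlock] <;> omega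
  have hhalf : (2 * (m * 2) * 6 + 6) / 2 = 12 * m + 3 := by omega
  have hquot : (2 * (m * 2) * 6 + 6) / 6 = 4 * m + 1 := by omega
  simp only [heffterSupport, mem_filter, mem_Icc, hhalf, hquot]
  refine ⟨⟨hx1, by omega⟩, fun ⟨c, hc⟩ => ?_⟩
  have hc3 : c < 3 := by nlinarith
  interval_cases c <;> omega

theorem natAbs_heffterBlock_inj {m j j' r r' : ℕ} {ρ γ ρ' γ' : Fin 2} (hj : j < 3)
    (hj' : j' < 3) (hr : r < m) (hr' : r' < m)
    (h : (heffterBlock m j r ρ γ).natAbs = (heffterBlock m j' r' ρ' γ').natAbs) :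
    j = j' ∧ r = r' ∧ ρ = ρ' ∧ γ = γ' := by
  interval_cases j <;> fin_cases ρ <;> fin_cases γ <;>
    simp only [heffterBlock, Fin.zero_eta, Fin.mk_one, Matrix.of_apply, Matrix.cons_val',
      Matrix.cons_val_zero, Matrix.cons_val_one, Matrix.empty_val',
      Matrix.cons_val_fin_one] at h <;>
    interval_cases j' <;> fin_cases ρ' <;> fin_cases γ' <;>
    simp only [Fin.zero_eta, Fin.mk_one, Matrix.of_apply, Matrix.cons_val',
      Matrix.cons_val_zero, Matrix.cons_val_one, Matrix.empty_val',
      Matrix.cons_val_fin_one] at h <;>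
    simp <;> omega

def heffterArray (m : ℕ) : Fin (m * 2) → Fin (m * 2) → Option ℤ :=
  blowup m 3 fun j r => heffterBlock m j r

theorem isIntHeffter_heffterArray {m : ℕ} (hm : 3 ≤ m) :
    IsIntHeffter (m * 2) 6 6 (heffterArray m) := by
  have : NeZero m := ⟨by omega⟩
  refine isIntHeffter_of_distinctAbs (rowFilled_blowup hm) (colFilled_blowup hm)
    (fun R => ?_) (fun C => ?_) (distinctAbs_blowup fun _ _ _ _ _ _ _ _ hj hj' hr hr' h =>
      natAbs_heffterBlock_inj hj hj' hr hr' h) (fun R C x hx => ?_)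
    (card_heffterSupport ⟨3, rfl⟩ (by norm_num) (dvd_mul_left 6 _))
  · rw [rowSum, heffterArray, sum_row_blowup (fun o => o.getD 0) rfl hm]
    exact sum_heffterBlock_row _ _ _
  · rw [colSum, heffterArray, sum_col_blowup (fun o => o.getD 0) rfl hm]
    exact sum_heffterBlock_col _ (fun j => ((j + C.divNat) % m : ℕ)) _
  · obtain ⟨j, hj, r, hr, ρ, γ, rfl⟩ := exists_of_blowup_eq_some hx
    exact natAbs_heffterBlock_mem ρ γ hj hr

/-- for every even `n ≥ 6`, there exists an integer cyclically
`(2,3)`-diagonal `H_6(n;6)`. -/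
theorem intHeffter_H6_cyc23diag (n : ℕ) (hn : 6 ≤ n) (hne : Even n) :
    ∃ A : Fin n → Fin n → Option ℤ,
      IsIntHeffter n 6 6 A ∧ CycSKDiagonal 2 3 A := by
  obtain ⟨m, hm⟩ := hne
  obtain rfl : n = m * 2 := by omega
  exact ⟨heffterArray m, isIntHeffter_heffterArray (by omega),
    cycSKDiagonal_blowup two_pos (by omega)⟩
end
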